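/- arXiv:2405.20034 — 6 statements merged into one kernel-verified Lean document; each statement's English description precedes it below -/
import Mathlib

section
/- Let A be a 3×3 Hermitian matrix with equidistant eigenvalues ℓ₁ ≥ ℓ₂ ≥ ℓ₃ (i.e. ℓ₁ - ℓ₂ = ℓ₂ - ℓ₃), and let a = (A₃₂, A₁₃, A₂₁). Then ‖a‖₂ ≤ (ℓ₁ - ℓ₃)/2. -/
/-!
The spectrum of a Hermitian matrix determines its Frobenius norm: `∑ |A i j|² = ∑ λᵢ²`. The
diagonal entries are real with sum `∑ λᵢ`, so by Cauchy–Schwarz they contribute at least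
`(∑ λᵢ)² / 3`. Hence `2 ‖a‖² ≤ ∑ λᵢ² - (∑ λᵢ)² / 3 = ((ℓ₁ - ℓ₂)² + (ℓ₂ - ℓ₃)² + (ℓ₁ - ℓ₃)²) / 3`,
which equals `(ℓ₁ - ℓ₃)² / 2` when the eigenvalues are equidistant.
-/

namespace Matrix.IsHermitian

variable {𝕜 n : Type*} [RCLike 𝕜] {A : Matrix n n 𝕜}

theorem norm_apply_comm (hA : A.IsHermitian) (i j : n) : ‖A i j‖ = ‖A j i‖ := by
  rw [← hA.apply i j, norm_star]

variable [Fintype n] [DecidableEq n]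

theorem trace_mul_self_eq_sum_eigenvalues_sq (hA : A.IsHermitian) :
    (A * A).trace = ∑ i, (hA.eigenvalues i : 𝕜) ^ 2 := by
  conv_lhs => rw [hA.spectral_theorem, ← map_mul, Unitary.conjStarAlgAut_apply, trace_mul_cycle,
    Unitary.coe_star_mul_self, one_mul, diagonal_mul_diagonal, trace_diagonal]
  simp [sq]

theorem sum_norm_sq_eq_sum_eigenvalues_sq (hA : A.IsHermitian) :
    ∑ i, ∑ j, ‖A i j‖ ^ 2 = ∑ i, hA.eigenvalues i ^ 2 := by
  apply RCLike.ofReal_injective (K := 𝕜)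
  push_cast
  rw [← hA.trace_mul_self_eq_sum_eigenvalues_sq, trace]
  refine Finset.sum_congr rfl fun i _ ↦ ?_
  rw [diag_apply, mul_apply]
  refine Finset.sum_congr rfl fun j _ ↦ ?_
  rw [← hA.apply j i, RCLike.star_def, RCLike.mul_conj]

theorem sq_sum_eigenvalues_le (hA : A.IsHermitian) :
    (∑ i, hA.eigenvalues i) ^ 2 ≤ (Fintype.card n : ℝ) * ∑ i, ‖A i i‖ ^ 2 := by
  have htrace : ∑ i, hA.eigenvalues i = ∑ i, RCLike.re (A i i) := by
    apply RCLike.ofReal_injective (K := 𝕜)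
    push_cast
    rw [← hA.trace_eq_sum_eigenvalues, trace]
    exact Finset.sum_congr rfl fun i _ ↦ (hA.coe_re_apply_self i).symm
  calc (∑ i, hA.eigenvalues i) ^ 2 ≤ (Fintype.card n : ℝ) * ∑ i, RCLike.re (A i i) ^ 2 := by
        rw [htrace]; exact sq_sum_le_card_mul_sum_sq
    _ ≤ Fintype.card n * ∑ i, ‖A i i‖ ^ 2 := by
        refine mul_le_mul_of_nonneg_left (Finset.sum_le_sum fun i _ ↦ ?_) (Nat.cast_nonneg _)
        exact sq_le_sq.mpr ((RCLike.abs_re_le_norm (A i i)).trans (le_abs_self _))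

theorem six_mul_offDiag_norm_sq_le {A : Matrix (Fin 3) (Fin 3) 𝕜} (hA : A.IsHermitian) :
    6 * (‖A 2 1‖ ^ 2 + ‖A 0 2‖ ^ 2 + ‖A 1 0‖ ^ 2) ≤
      3 * ∑ i, hA.eigenvalues i ^ 2 - (∑ i, hA.eigenvalues i) ^ 2 := by
  have hfrob := hA.sum_norm_sq_eq_sum_eigenvalues_sq
  have hdiag := hA.sq_sum_eigenvalues_le
  simp only [Fin.sum_univ_three, Fintype.card_fin, Nat.cast_ofNat] at hfrob hdiag ⊢
  rw [hA.norm_apply_comm 0 1, hA.norm_apply_comm 1 2, hA.norm_apply_comm 2 0] at hfrob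
  linarith

end Matrix.IsHermitian

/-- For a 3×3 Hermitian matrix `A` with equidistant eigenvalues `ℓ₁ ≥ ℓ₂ ≥ ℓ₃`
(`ℓ₁ - ℓ₂ = ℓ₂ - ℓ₃`), the vector `a = (A₃₂, A₁₃, A₂₁)` satisfies
`‖a‖₂ ≤ (ℓ₁ - ℓ₃)/2`. -/
theorem stmt_5 (A : Matrix (Fin 3) (Fin 3) ℂ) (hA : A.IsHermitian)
    (ℓ₁ ℓ₂ ℓ₃ : ℝ) (h12 : ℓ₂ ≤ ℓ₁) (h23 : ℓ₃ ≤ ℓ₂) (heq : ℓ₁ - ℓ₂ = ℓ₂ - ℓ₃)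
    (heig : ∃ g : Equiv.Perm (Fin 3), hA.eigenvalues ∘ g = ![ℓ₁, ℓ₂, ℓ₃]) :
    Real.sqrt (‖A 2 1‖ ^ 2 + ‖A 0 2‖ ^ 2 + ‖A 1 0‖ ^ 2)
      ≤ (ℓ₁ - ℓ₃) / 2 := by
  obtain ⟨g, hg⟩ := heig
  have hsum (f : ℝ → ℝ) : ∑ i, f (hA.eigenvalues i) = f ℓ₁ + f ℓ₂ + f ℓ₃ := by
    have hval : ∀ i, hA.eigenvalues (g i) = ![ℓ₁, ℓ₂, ℓ₃] i := congrFun hg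
    rw [← Equiv.sum_comp g, Fin.sum_univ_three, hval, hval, hval]
    rfl
  have hbound := hA.six_mul_offDiag_norm_sq_le
  rw [show ∑ i, hA.eigenvalues i = ℓ₁ + ℓ₂ + ℓ₃ from hsum id,
    show ∑ i, hA.eigenvalues i ^ 2 = ℓ₁ ^ 2 + ℓ₂ ^ 2 + ℓ₃ ^ 2 from hsum (· ^ 2)] at hbound
  have hmid : ℓ₂ = (ℓ₁ + ℓ₃) / 2 := by linarith
  rw [hmid] at hbound
  exact (Real.sqrt_le_left (by linarith)).mpr (by linarith)
end

section
/- Let A, B be 3×3 Hermitian matrices with equidistant eigenvalues. For any unitaries V, W ∈ U(3), define ω = (Im(ã_x b̃_x), Im(ã_y b̃_y), Im(ã_z b̃_z)) where ã = ((V*AV)₃₂, (V*AV)₁₃, (V*AV)₂₁) and b̃ = ((W*BW)₃₂, (W*BW)₁₃, (W*BW)₂₁). Then ‖ω‖₁ ≤ (ℓ₁(A) - ℓ₃(A))(ℓ₁(B) - ℓ₃(B))/4. -/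
open Matrix


lemma conj_trace (U : Matrix.unitaryGroup (Fin 3) ℂ) (A : Matrix (Fin 3) (Fin 3) ℂ) :
    (star (U : Matrix (Fin 3) (Fin 3) ℂ) * A * (U : Matrix (Fin 3) (Fin 3) ℂ)).trace = A.trace := by
  rw [Matrix.trace_mul_cycle, (Matrix.mem_unitaryGroup_iff).mp U.2, one_mul]

lemma conj_herm (U : Matrix.unitaryGroup (Fin 3) ℂ) (A : Matrix (Fin 3) (Fin 3) ℂ)
    (hA : A.IsHermitian) :
    (star (U : Matrix (Fin 3) (Fin 3) ℂ) * A * (U : Matrix (Fin 3) (Fin 3) ℂ)).IsHermitian := by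
  unfold Matrix.IsHermitian at *
  rw [conjTranspose_mul, conjTranspose_mul, hA, star_eq_conjTranspose, conjTranspose_conjTranspose,
    mul_assoc]

lemma conj_mul_key (U : Matrix.unitaryGroup (Fin 3) ℂ) (X Y : Matrix (Fin 3) (Fin 3) ℂ) :
    (star (U : Matrix (Fin 3) (Fin 3) ℂ) * X * (U : Matrix (Fin 3) (Fin 3) ℂ))
      * (star (U : Matrix (Fin 3) (Fin 3) ℂ) * Y * (U : Matrix (Fin 3) (Fin 3) ℂ))
      = star (U : Matrix (Fin 3) (Fin 3) ℂ) * (X * Y) * (U : Matrix (Fin 3) (Fin 3) ℂ) := by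
  have h1 : (U : Matrix (Fin 3) (Fin 3) ℂ) * star (U : Matrix (Fin 3) (Fin 3) ℂ) = 1 :=
    (Matrix.mem_unitaryGroup_iff).mp U.2
  calc (star (U : Matrix (Fin 3) (Fin 3) ℂ) * X * (U : Matrix (Fin 3) (Fin 3) ℂ))
        * (star (U : Matrix (Fin 3) (Fin 3) ℂ) * Y * (U : Matrix (Fin 3) (Fin 3) ℂ))
      = star (U : Matrix (Fin 3) (Fin 3) ℂ) * (X * (((U : Matrix (Fin 3) (Fin 3) ℂ)
          * star (U : Matrix (Fin 3) (Fin 3) ℂ)) * (Y * (U : Matrix (Fin 3) (Fin 3) ℂ)))) := by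
        simp only [mul_assoc]
    _ = star (U : Matrix (Fin 3) (Fin 3) ℂ) * (X * (Y * (U : Matrix (Fin 3) (Fin 3) ℂ))) := by
        rw [h1, one_mul]
    _ = star (U : Matrix (Fin 3) (Fin 3) ℂ) * (X * Y) * (U : Matrix (Fin 3) (Fin 3) ℂ) := by
        simp only [mul_assoc]

lemma frob_bound (A : Matrix (Fin 3) (Fin 3) ℂ) (hA : A.IsHermitian)
    (a₁ a₂ a₃ : ℝ) (haeq : a₁ - a₂ = a₂ - a₃)
    (heig : ∃ g : Equiv.Perm (Fin 3), hA.eigenvalues ∘ g = ![a₁, a₂, a₃])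
    (V : Matrix.unitaryGroup (Fin 3) ℂ)
    (M : Matrix (Fin 3) (Fin 3) ℂ)
    (hM : M = star (V : Matrix (Fin 3) (Fin 3) ℂ) * A * (V : Matrix (Fin 3) (Fin 3) ℂ)) :
    ‖M 2 1‖ ^ 2 + ‖M 0 2‖ ^ 2 + ‖M 1 0‖ ^ 2
      ≤ ((a₁ - a₃) / 2) ^ 2 := by
  obtain ⟨g, hg⟩ := heig
  have hgi : ∀ i, hA.eigenvalues (g i) = ![a₁, a₂, a₃] i := fun i => congrFun hg i
  have hsum : ∑ i, hA.eigenvalues i = a₁ + a₂ + a₃ := by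
    rw [← Equiv.sum_comp g hA.eigenvalues]
    simp only [hgi]
    simp [Fin.sum_univ_three]
  have hsq : ∑ i, hA.eigenvalues i ^ 2 = a₁ ^ 2 + a₂ ^ 2 + a₃ ^ 2 := by
    rw [← Equiv.sum_comp g (fun i => hA.eigenvalues i ^ 2)]
    simp only [hgi]
    simp [Fin.sum_univ_three]
  set U := hA.eigenvectorUnitary with hU
  have hdiag : star (U : Matrix (Fin 3) (Fin 3) ℂ) * A * (U : Matrix (Fin 3) (Fin 3) ℂ)
      = diagonal (RCLike.ofReal ∘ hA.eigenvalues) := by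
    have h := hA.conjStarAlgAut_star_eigenvectorUnitary; rwa [Unitary.conjStarAlgAut_star_apply] at h
  have htrA : A.trace = ((a₁ + a₂ + a₃ : ℝ) : ℂ) := by
    rw [← conj_trace U A, hdiag, trace_diagonal]
    push_cast [← hsum]
    rfl
  have hAA : star (U : Matrix (Fin 3) (Fin 3) ℂ) * (A * A) * (U : Matrix (Fin 3) (Fin 3) ℂ)
      = diagonal (fun i => ((hA.eigenvalues i : ℝ) : ℂ) ^ 2) := by
    rw [← conj_mul_key U A A, hdiag, diagonal_mul_diagonal]
    ext i
    simp [sq]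
  have htrA2 : (A * A).trace = ((a₁ ^ 2 + a₂ ^ 2 + a₃ ^ 2 : ℝ) : ℂ) := by
    rw [← conj_trace U (A * A), hAA, trace_diagonal]
    push_cast [← hsq]
    rfl
  have hMherm : M.IsHermitian := hM ▸ conj_herm V A hA
  have hMconj : ∀ i j, (starRingEnd ℂ) (M i j) = M j i := by
    intro i j
    have := congrFun (congrFun hMherm j) i
    simpa [conjTranspose_apply] using this
  have htrM : M.trace = ((a₁ + a₂ + a₃ : ℝ) : ℂ) := by
    rw [hM, conj_trace, htrA]
  have htrM2 : (M * M).trace = ((a₁ ^ 2 + a₂ ^ 2 + a₃ ^ 2 : ℝ) : ℂ) := by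
    rw [hM, conj_mul_key, conj_trace, htrA2]
  have hdiagim : ∀ i, (M i i).im = 0 := by
    intro i
    have h2 := congrArg Complex.im (hMconj i i)
    simp [Complex.conj_im] at h2
    linarith
  have e1 : (M 0 0).re + (M 1 1).re + (M 2 2).re = a₁ + a₂ + a₃ := by
    have := congrArg Complex.re htrM
    simpa [Matrix.trace, Matrix.diag, Fin.sum_univ_three] using this
  have habs : ∀ i j, M i j * M j i = ((‖M i j‖ ^ 2 : ℝ) : ℂ) := by
    intro i j
    rw [← hMconj i j, Complex.mul_conj, Complex.sq_norm]
  have hexp : (M * M).trace = ∑ i, ∑ j, ((‖M i j‖ ^ 2 : ℝ) : ℂ) := by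
    simp only [Matrix.trace, Matrix.diag, Matrix.mul_apply, habs]
  have e2' : ∑ i, ∑ j, ‖M i j‖ ^ 2 = a₁ ^ 2 + a₂ ^ 2 + a₃ ^ 2 := by
    have h := htrM2
    rw [hexp] at h
    exact_mod_cast h
  have hsymm : ∀ i j, ‖M i j‖ = ‖M j i‖ := by
    intro i j
    rw [← hMconj j i, Complex.norm_conj]
  have hdre : ∀ i, ‖M i i‖ ^ 2 = (M i i).re ^ 2 := by
    intro i
    rw [Complex.sq_norm, Complex.normSq_apply, hdiagim]
    ring
  have e2 : (M 0 0).re ^ 2 + (M 1 1).re ^ 2 + (M 2 2).re ^ 2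
      + 2 * (‖M 2 1‖ ^ 2 + ‖M 0 2‖ ^ 2 + ‖M 1 0‖ ^ 2)
      = a₁ ^ 2 + a₂ ^ 2 + a₃ ^ 2 := by
    rw [← e2']
    simp only [Fin.sum_univ_three, hdre]
    rw [hsymm 0 1, hsymm 0 2, hsymm 1 2]
    ring
  have ha2 : a₂ = (a₁ + a₃) / 2 := by linarith
  have e1sq : ((M 0 0).re + (M 1 1).re + (M 2 2).re) ^ 2 = (a₁ + a₂ + a₃) ^ 2 := by rw [e1]
  nlinarith [sq_nonneg ((M 0 0).re - (M 1 1).re), sq_nonneg ((M 1 1).re - (M 2 2).re),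
    sq_nonneg ((M 0 0).re - (M 2 2).re), e1sq, e2, ha2]

/-- For 3×3 Hermitian `A`, `B` with equidistant eigenvalues and any unitaries `V`, `W`,
the vector `ω` with components `Im(ãᵢ b̃ᵢ)` built from the off-diagonal entries of
`V*AV` and `W*BW` satisfies `‖ω‖₁ ≤ (ℓ₁(A)-ℓ₃(A))(ℓ₁(B)-ℓ₃(B))/4`. -/
theorem stmt_6 (A B : Matrix (Fin 3) (Fin 3) ℂ)
    (hA : A.IsHermitian) (hB : B.IsHermitian)
    (a₁ a₂ a₃ : ℝ) (ha12 : a₂ ≤ a₁) (ha23 : a₃ ≤ a₂) (haeq : a₁ - a₂ = a₂ - a₃)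
    (b₁ b₂ b₃ : ℝ) (hb12 : b₂ ≤ b₁) (hb23 : b₃ ≤ b₂) (hbeq : b₁ - b₂ = b₂ - b₃)
    (heigA : ∃ g : Equiv.Perm (Fin 3), hA.eigenvalues ∘ g = ![a₁, a₂, a₃])
    (heigB : ∃ g : Equiv.Perm (Fin 3), hB.eigenvalues ∘ g = ![b₁, b₂, b₃])
    (V W : Matrix.unitaryGroup (Fin 3) ℂ)
    (M N : Matrix (Fin 3) (Fin 3) ℂ)
    (hM : M = star (V : Matrix (Fin 3) (Fin 3) ℂ) * A * (V : Matrix (Fin 3) (Fin 3) ℂ))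
    (hN : N = star (W : Matrix (Fin 3) (Fin 3) ℂ) * B * (W : Matrix (Fin 3) (Fin 3) ℂ)) :
    |(M 2 1 * N 2 1).im| + |(M 0 2 * N 0 2).im| + |(M 1 0 * N 1 0).im|
      ≤ (a₁ - a₃) * (b₁ - b₃) / 4 := by
  have hxb := frob_bound A hA a₁ a₂ a₃ haeq heigA V M hM
  have hyb := frob_bound B hB b₁ b₂ b₃ hbeq heigB W N hN
  set x₁ := ‖M 2 1‖; set x₂ := ‖M 0 2‖; set x₃ := ‖M 1 0‖
  set y₁ := ‖N 2 1‖; set y₂ := ‖N 0 2‖; set y₃ := ‖N 1 0‖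
  have him : ∀ (z w : ℂ), |(z * w).im| ≤ ‖z‖ * ‖w‖ := by
    intro z w
    calc |(z * w).im| ≤ ‖z * w‖ := Complex.abs_im_le_norm _
      _ = ‖z‖ * ‖w‖ := norm_mul _ _
  have h1 := him (M 2 1) (N 2 1)
  have h2 := him (M 0 2) (N 0 2)
  have h3 := him (M 1 0) (N 1 0)
  have hdA : (0:ℝ) ≤ (a₁ - a₃) / 2 := by linarith
  have hdB : (0:ℝ) ≤ (b₁ - b₃) / 2 := by linarith
  have hx0 : (0:ℝ) ≤ x₁ := norm_nonneg _
  have hx1 : (0:ℝ) ≤ x₂ := norm_nonneg _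
  have hx2 : (0:ℝ) ≤ x₃ := norm_nonneg _
  have hy0 : (0:ℝ) ≤ y₁ := norm_nonneg _
  have hy1 : (0:ℝ) ≤ y₂ := norm_nonneg _
  have hy2 : (0:ℝ) ≤ y₃ := norm_nonneg _
  have key : x₁ * y₁ + x₂ * y₂ + x₃ * y₃ ≤ (a₁ - a₃) / 2 * ((b₁ - b₃) / 2) := by
    have hprod : (x₁ ^ 2 + x₂ ^ 2 + x₃ ^ 2) * (y₁ ^ 2 + y₂ ^ 2 + y₃ ^ 2)
        ≤ ((a₁ - a₃) / 2) ^ 2 * ((b₁ - b₃) / 2) ^ 2 := by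
      apply mul_le_mul hxb hyb (by positivity) (by positivity)
    nlinarith [sq_nonneg (x₁ * y₂ - x₂ * y₁), sq_nonneg (x₁ * y₃ - x₃ * y₁),
      sq_nonneg (x₂ * y₃ - x₃ * y₂), mul_nonneg hdA hdB,
      mul_nonneg (mul_nonneg hx0 hy0) (mul_nonneg hx1 hy1),
      sq_nonneg (x₁ * y₁ + x₂ * y₂ + x₃ * y₃ + (a₁ - a₃) / 2 * ((b₁ - b₃) / 2)),
      mul_nonneg (mul_nonneg hx0 hy0) (mul_nonneg hx2 hy2),
      mul_nonneg (mul_nonneg hx1 hy1) (mul_nonneg hx2 hy2)]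
  calc |(M 2 1 * N 2 1).im| + |(M 0 2 * N 0 2).im| + |(M 1 0 * N 1 0).im|
      ≤ x₁ * y₁ + x₂ * y₂ + x₃ * y₃ := by linarith
    _ ≤ (a₁ - a₃) / 2 * ((b₁ - b₃) / 2) := key
    _ = (a₁ - a₃) * (b₁ - b₃) / 4 := by ring
end

section
/- Let C be a 3×3 real matrix with singular values 𝓈₁ ≥ 𝓈₂ ≥ 𝓈₃ ≥ 0. Then for all rotation matrices R, S ∈ SO(3), (RᵀCS)₁₂ + (RᵀCS)₂₁ ≤ 𝓈₁ + 𝓈₂, and there exist R, S ∈ SO(3) achieving equality. -/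
open Matrix

namespace Stmt7Aux

/-- expand a 3-dim dot product -/
lemma dot_expand (a b : Fin 3 → ℝ) :
    a ⬝ᵥ b = a 0 * b 0 + a 1 * b 1 + a 2 * b 2 := by
  simp [dotProduct, Fin.sum_univ_three]

/-- Bessel-type inequality for a family of three pairwise-orthogonal vectors of norm ≤ 1. -/
lemma bessel3 (w : Fin 3 → Fin 3 → ℝ)
    (h01 : w 0 ⬝ᵥ w 1 = 0) (h02 : w 0 ⬝ᵥ w 2 = 0) (h12 : w 1 ⬝ᵥ w 2 = 0)
    (n0 : w 0 ⬝ᵥ w 0 ≤ 1) (n1 : w 1 ⬝ᵥ w 1 ≤ 1) (n2 : w 2 ⬝ᵥ w 2 ≤ 1)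
    (u : Fin 3 → ℝ) :
    (w 0 ⬝ᵥ u) ^ 2 + (w 1 ⬝ᵥ u) ^ 2 + (w 2 ⬝ᵥ u) ^ 2 ≤ u ⬝ᵥ u := by
  obtain ⟨c0, hc0⟩ : ∃ c, w 0 ⬝ᵥ u = c := ⟨_, rfl⟩
  obtain ⟨c1, hc1⟩ : ∃ c, w 1 ⬝ᵥ u = c := ⟨_, rfl⟩
  obtain ⟨c2, hc2⟩ : ∃ c, w 2 ⬝ᵥ u = c := ⟨_, rfl⟩
  have key : 0 ≤ (u ⬝ᵥ u) - 2*(c0*(w 0 ⬝ᵥ u)+c1*(w 1 ⬝ᵥ u)+c2*(w 2 ⬝ᵥ u))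
      + (c0^2*(w 0 ⬝ᵥ w 0) + c1^2*(w 1 ⬝ᵥ w 1) + c2^2*(w 2 ⬝ᵥ w 2)
      + 2*c0*c1*(w 0 ⬝ᵥ w 1) + 2*c0*c2*(w 0 ⬝ᵥ w 2) + 2*c1*c2*(w 1 ⬝ᵥ w 2)) := by
    have h := add_nonneg (add_nonneg
      (sq_nonneg (u 0 - c0*w 0 0 - c1*w 1 0 - c2*w 2 0))
      (sq_nonneg (u 1 - c0*w 0 1 - c1*w 1 1 - c2*w 2 1)))
      (sq_nonneg (u 2 - c0*w 0 2 - c1*w 1 2 - c2*w 2 2))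
    simp only [dot_expand]
    nlinarith [h]
  rw [hc0, hc1, hc2, h01, h02, h12] at key
  rw [hc0, hc1, hc2]
  nlinarith [mul_nonneg (sq_nonneg c0) (sub_nonneg.2 n0),
    mul_nonneg (sq_nonneg c1) (sub_nonneg.2 n1),
    mul_nonneg (sq_nonneg c2) (sub_nonneg.2 n2), key]

def cross (a b : Fin 3 → ℝ) : Fin 3 → ℝ :=
  ![a 1 * b 2 - a 2 * b 1, a 2 * b 0 - a 0 * b 2, a 0 * b 1 - a 1 * b 0]

lemma star_real (A : Matrix (Fin 3) (Fin 3) ℝ) : star A = Aᵀ := by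
  ext i j
  simp [Matrix.star_eq_conjTranspose, Matrix.conjTranspose_apply]

/-- given an orthonormal pair, an SO(3) matrix with that pair as first two columns -/
lemma so3_cols (x y : Fin 3 → ℝ) (hx : x ⬝ᵥ x = 1) (hy : y ⬝ᵥ y = 1) (hxy : x ⬝ᵥ y = 0) :
    ∃ M : Matrix (Fin 3) (Fin 3) ℝ, M ∈ Matrix.specialOrthogonalGroup (Fin 3) ℝ ∧
      (∀ i, M i 0 = x i) ∧ (∀ i, M i 1 = y i) := by
  simp only [dot_expand] at hx hy hxy
  refine ⟨Matrix.of (fun i j => if j = 0 then x i else if j = 1 then y i else cross x y i),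
    ?_, fun i => rfl, fun i => by simp⟩
  rw [Matrix.mem_specialOrthogonalGroup_iff]
  constructor
  · rw [Matrix.mem_orthogonalGroup_iff']
    ext i j
    fin_cases i <;> fin_cases j <;>
      simp [Matrix.mul_apply, Fin.sum_univ_three, cross, Matrix.one_apply] <;>
      first
        | linear_combination hx
        | linear_combination hy
        | linear_combination hxy
        | linear_combination (y 0^2+y 1^2+y 2^2) * hx + hy - (x 0*y 0+x 1*y 1+x 2*y 2) * hxy
        | ring
  · rw [Matrix.det_fin_three]
    simp [cross]
    linear_combination (y 0^2+y 1^2+y 2^2) * hx + hy - (x 0*y 0+x 1*y 1+x 2*y 2) * hxy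

/-- a unit vector orthogonal to a given unit vector in ℝ³ -/
lemma perp_unit (q : Fin 3 → ℝ) (hq : q ⬝ᵥ q = 1) :
    ∃ y : Fin 3 → ℝ, y ⬝ᵥ y = 1 ∧ q ⬝ᵥ y = 0 := by
  by_cases h : q 0 = 0 ∧ q 1 = 0
  · exact ⟨![1,0,0], by rw [dot_expand]; norm_num [Matrix.cons_val_two, Matrix.vecHead, Matrix.vecTail], by rw [dot_expand]; norm_num [h.1, Matrix.cons_val_two, Matrix.vecHead, Matrix.vecTail]⟩
  · have hpos : 0 < q 0 ^ 2 + q 1 ^ 2 := by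
      rcases lt_or_eq_of_le (by positivity : (0:ℝ) ≤ q 0 ^ 2 + q 1 ^ 2) with h' | h'
      · exact h'
      · exfalso
        apply h
        constructor <;> [skip; skip] <;>
          · have := h'.symm
            nlinarith [sq_nonneg (q 0), sq_nonneg (q 1)]
    set n := Real.sqrt (q 0 ^ 2 + q 1 ^ 2) with hn
    have hn2 : n ^ 2 = q 0 ^ 2 + q 1 ^ 2 := Real.sq_sqrt (le_of_lt hpos)
    have hnpos : 0 < n := Real.sqrt_pos.2 hpos
    refine ⟨fun i => n⁻¹ * (![-q 1, q 0, 0] i), ?_, ?_⟩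
    · have : (fun i => n⁻¹ * (![-q 1, q 0, 0] i)) ⬝ᵥ (fun i => n⁻¹ * (![-q 1, q 0, 0] i))
          = n⁻¹ ^ 2 * (q 0 ^ 2 + q 1 ^ 2) := by
        simp [dot_expand]; ring
      rw [this, ← hn2]
      field_simp
    · simp [dot_expand]; ring

end Stmt7Aux

open Stmt7Aux

set_option maxHeartbeats 1000000 in
/-- For a real 3×3 matrix `C` with singular values `𝓈₁ ≥ 𝓈₂ ≥ 𝓈₃ ≥ 0`
(i.e. the eigenvalues of `CᵀC` are `𝓈₁², 𝓈₂², 𝓈₃²`), one has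
`(RᵀCS)₁₂ + (RᵀCS)₂₁ ≤ 𝓈₁ + 𝓈₂` for all rotations `R, S ∈ SO(3)`, and
equality is achieved for some rotations. -/
theorem stmt_7 (C : Matrix (Fin 3) (Fin 3) ℝ)
    (s₁ s₂ s₃ : ℝ) (h12 : s₂ ≤ s₁) (h23 : s₃ ≤ s₂) (h3 : 0 ≤ s₃)
    (hh : (Cᵀ * C).IsHermitian)
    (heig : ∃ g : Equiv.Perm (Fin 3), hh.eigenvalues ∘ g = ![s₁ ^ 2, s₂ ^ 2, s₃ ^ 2]) :
    (∀ R S : Matrix.specialOrthogonalGroup (Fin 3) ℝ,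
      ((R : Matrix (Fin 3) (Fin 3) ℝ)ᵀ * C * (S : Matrix (Fin 3) (Fin 3) ℝ)) 0 1 +
      ((R : Matrix (Fin 3) (Fin 3) ℝ)ᵀ * C * (S : Matrix (Fin 3) (Fin 3) ℝ)) 1 0
        ≤ s₁ + s₂) ∧
    ∃ R S : Matrix.specialOrthogonalGroup (Fin 3) ℝ,
      ((R : Matrix (Fin 3) (Fin 3) ℝ)ᵀ * C * (S : Matrix (Fin 3) (Fin 3) ℝ)) 0 1 +
      ((R : Matrix (Fin 3) (Fin 3) ℝ)ᵀ * C * (S : Matrix (Fin 3) (Fin 3) ℝ)) 1 0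
        = s₁ + s₂ := by
  obtain ⟨g, hg⟩ := heig
  set σ : Fin 3 → ℝ := ![s₁, s₂, s₃] with hσdef
  have hσ0 : σ 0 = s₁ := rfl
  have hσ1 : σ 1 = s₂ := rfl
  have hσ2 : σ 2 = s₃ := rfl
  have hσnn : ∀ j, 0 ≤ σ j := by
    intro j; fin_cases j <;> simp [hσdef] <;> linarith
  have hσsq : ∀ j, hh.eigenvalues (g j) = σ j ^ 2 := by
    intro j; fin_cases j <;> exact congrFun hg _
  set Q : Matrix (Fin 3) (Fin 3) ℝ := (hh.eigenvectorUnitary : Matrix (Fin 3) (Fin 3) ℝ)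
    with hQdef
  have hQ1 : Qᵀ * Q = 1 := by
    rw [← star_real Q]
    exact (Matrix.mem_unitaryGroup_iff').mp hh.eigenvectorUnitary.2
  have hQ2 : Q * Qᵀ = 1 := by
    rw [← star_real Q]
    exact (Matrix.mem_unitaryGroup_iff).mp hh.eigenvectorUnitary.2
  have hspec : Cᵀ * C = Q * Matrix.diagonal hh.eigenvalues * Qᵀ := by
    have h := hh.spectral_theorem
    rw [RCLike.ofReal_real_eq_id, Function.id_comp, Unitary.conjStarAlgAut_apply, star_real] at h
    exact h
  -- permuted eigenvector matrix and its columns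
  set B : Matrix (Fin 3) (Fin 3) ℝ := Q.submatrix id ⇑g with hBdef
  set b : Fin 3 → Fin 3 → ℝ := fun j i => B i j with hbdef
  have hB1 : Bᵀ * B = 1 := by
    rw [hBdef, Matrix.transpose_submatrix]
    have : (Qᵀ.submatrix ⇑g id) * (Q.submatrix id ⇑g)
        = ((Qᵀ * Q).submatrix ⇑g ⇑g) := by
      have := Matrix.submatrix_mul_equiv Qᵀ Q (⇑g) (Equiv.refl (Fin 3)) (⇑g)
      simpa using this
    rw [this, hQ1]
    exact Matrix.submatrix_one_equiv g
  have hB2 : B * Bᵀ = 1 := by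
    rw [hBdef, Matrix.transpose_submatrix]
    have := Matrix.submatrix_mul_equiv Q Qᵀ (id : Fin 3 → Fin 3) g (id : Fin 3 → Fin 3)
    rw [this, hQ2]
    simp
  have hbb : ∀ i j, b i ⬝ᵥ b j = if i = j then 1 else 0 := by
    intro i j
    have h := congrFun (congrFun hB1 i) j
    simpa [Matrix.mul_apply, Matrix.transpose_apply, Matrix.one_apply, dotProduct,
      hbdef] using h
  have hcomp : ∀ v : Fin 3 → ℝ,
      (b 0 ⬝ᵥ v) • b 0 + (b 1 ⬝ᵥ v) • b 1 + (b 2 ⬝ᵥ v) • b 2 = v := by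
    intro v; funext i
    have h : (B * Bᵀ) *ᵥ v = v := by rw [hB2, Matrix.one_mulVec]
    have h2 := congrFun h i
    simp only [Matrix.mulVec, Matrix.mul_apply, dotProduct, Fin.sum_univ_three,
      Matrix.transpose_apply] at h2
    simp only [Pi.add_apply, Pi.smul_apply, smul_eq_mul, dotProduct, Fin.sum_univ_three, hbdef]
    linear_combination h2
  -- the eigen-equation for the columns b j
  have hbsingle : ∀ j, b j = Q *ᵥ Pi.single (g j) 1 := by
    intro j; funext i
    simp [hbdef, hBdef, Matrix.submatrix_apply]
  have hCCb : ∀ j, (Cᵀ * C) *ᵥ b j = (σ j ^ 2) • b j := by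
    intro j
    rw [hspec, hbsingle j, Matrix.mulVec_mulVec]
    have h1 : Q * Matrix.diagonal hh.eigenvalues * Qᵀ * Q
        = Q * Matrix.diagonal hh.eigenvalues := by
      rw [mul_assoc (Q * Matrix.diagonal hh.eigenvalues), hQ1, mul_one]
    rw [h1, ← Matrix.mulVec_mulVec, Matrix.diagonal_mulVec_single, mul_one, hσsq j]
    have h2 : (Pi.single (g j) (σ j ^ 2) : Fin 3 → ℝ)
        = (σ j ^ 2) • (Pi.single (g j) (1:ℝ) : Fin 3 → ℝ) := by
      rw [← Pi.single_smul, smul_eq_mul, mul_one]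
    rw [h2, Matrix.mulVec_smul]
  have hCdot : ∀ i j, (C *ᵥ b i) ⬝ᵥ (C *ᵥ b j) = if i = j then σ j ^ 2 else 0 := by
    intro i j
    have h : (C *ᵥ b i) ⬝ᵥ (C *ᵥ b j) = b i ⬝ᵥ ((Cᵀ * C) *ᵥ b j) := by
      simp only [dotProduct, Matrix.mulVec, Matrix.mul_apply, Fin.sum_univ_three,
        Matrix.transpose_apply]
      ring
    rw [h, hCCb j, dotProduct_smul, smul_eq_mul, hbb i j]
    by_cases hij : i = j <;> simp [hij]
  -- the left singular directions
  set p : Fin 3 → Fin 3 → ℝ := fun j => (σ j)⁻¹ • (C *ᵥ b j) with hpdef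
  have hCb : ∀ j, C *ᵥ b j = σ j • p j := by
    intro j
    by_cases h : σ j = 0
    · have h0 : (C *ᵥ b j) ⬝ᵥ (C *ᵥ b j) = 0 := by rw [hCdot]; simp [h]
      rw [dotProduct_self_eq_zero] at h0
      simp [hpdef, h0, h]
    · rw [hpdef]
      simp only
      rw [smul_smul, mul_inv_cancel₀ h, one_smul]
  have hpp : ∀ i j, i ≠ j → p i ⬝ᵥ p j = 0 := by
    intro i j hij
    rw [hpdef]
    simp only
    rw [smul_dotProduct, dotProduct_smul, hCdot i j]
    simp [hij]
  have hpn1 : ∀ j, σ j ≠ 0 → p j ⬝ᵥ p j = 1 := by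
    intro j h
    rw [hpdef]
    simp only
    rw [smul_dotProduct, dotProduct_smul, hCdot j j]
    simp only [if_pos rfl, ↓reduceIte, smul_eq_mul]
    field_simp
  have hpn : ∀ j, p j ⬝ᵥ p j ≤ 1 := by
    intro j
    by_cases h : σ j = 0
    · rw [hpdef]; simp only
      rw [smul_dotProduct, dotProduct_smul, hCdot j j]
      simp [h]
    · rw [hpn1 j h]
  -- key expansion of x ⬝ᵥ (C *ᵥ w)
  have hdot : ∀ x w : Fin 3 → ℝ, x ⬝ᵥ (C *ᵥ w)
      = σ 0 * ((p 0 ⬝ᵥ x) * (b 0 ⬝ᵥ w)) + σ 1 * ((p 1 ⬝ᵥ x) * (b 1 ⬝ᵥ w))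
        + σ 2 * ((p 2 ⬝ᵥ x) * (b 2 ⬝ᵥ w)) := by
    intro x w
    conv_lhs => rw [← hcomp w]
    rw [Matrix.mulVec_add, Matrix.mulVec_add, Matrix.mulVec_smul, Matrix.mulVec_smul,
      Matrix.mulVec_smul, hCb 0, hCb 1, hCb 2]
    simp only [Pi.add_apply, Pi.smul_apply, smul_eq_mul, dotProduct, Fin.sum_univ_three]
    ring
  have entry_aux : ∀ (M N : Matrix (Fin 3) (Fin 3) ℝ) (a c : Fin 3),
      (Mᵀ * C * N) a c = (fun i => M i a) ⬝ᵥ (C *ᵥ (fun i => N i c)) := by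
    intro M N a c
    simp [Matrix.mul_apply, Matrix.mulVec, dotProduct, Fin.sum_univ_three]
    ring
  clear_value σ Q B b p
  constructor
  · -- the inequality
    intro R S
    set Rm : Matrix (Fin 3) (Fin 3) ℝ := (R : Matrix (Fin 3) (Fin 3) ℝ) with hRm
    set Sm : Matrix (Fin 3) (Fin 3) ℝ := (S : Matrix (Fin 3) (Fin 3) ℝ) with hSm
    set u : Fin 3 → Fin 3 → ℝ := fun j i => Rm i j with hudef
    set v : Fin 3 → Fin 3 → ℝ := fun j i => Sm i j with hvdef
    have hRo : Rmᵀ * Rm = 1 := by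
      rw [← star_real Rm]
      exact (Matrix.mem_unitaryGroup_iff').mp ((Matrix.mem_specialOrthogonalGroup_iff.mp R.2).1)
    have hSo : Smᵀ * Sm = 1 := by
      rw [← star_real Sm]
      exact (Matrix.mem_unitaryGroup_iff').mp ((Matrix.mem_specialOrthogonalGroup_iff.mp S.2).1)
    have huu : ∀ i j, u i ⬝ᵥ u j = if i = j then 1 else 0 := by
      intro i j
      have h := congrFun (congrFun hRo i) j
      simpa [Matrix.mul_apply, Matrix.transpose_apply, Matrix.one_apply, dotProduct,
        hudef] using h
    have hvv : ∀ i j, v i ⬝ᵥ v j = if i = j then 1 else 0 := by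
      intro i j
      have h := congrFun (congrFun hSo i) j
      simpa [Matrix.mul_apply, Matrix.transpose_apply, Matrix.one_apply, dotProduct,
        hvdef] using h
    have hX0 : (Rmᵀ * C * Sm) 0 1 = u 0 ⬝ᵥ (C *ᵥ v 1) := entry_aux Rm Sm 0 1
    have hX1 : (Rmᵀ * C * Sm) 1 0 = u 1 ⬝ᵥ (C *ᵥ v 0) := entry_aux Rm Sm 1 0
    clear_value u v Rm Sm
    rw [hX0, hX1, hdot, hdot]
    -- Bessel inequalities
    have hbP0 := bessel3 p (hpp 0 1 (by decide)) (hpp 0 2 (by decide)) (hpp 1 2 (by decide))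
      (hpn 0) (hpn 1) (hpn 2) (u 0)
    have hbP1 := bessel3 p (hpp 0 1 (by decide)) (hpp 0 2 (by decide)) (hpp 1 2 (by decide))
      (hpn 0) (hpn 1) (hpn 2) (u 1)
    have hbB0 := bessel3 b (by simpa using hbb 0 1) (by simpa using hbb 0 2)
      (by simpa using hbb 1 2) (by simp [hbb]) (by simp [hbb]) (by simp [hbb]) (v 0)
    have hbB1 := bessel3 b (by simpa using hbb 0 1) (by simpa using hbb 0 2)
      (by simpa using hbb 1 2) (by simp [hbb]) (by simp [hbb]) (by simp [hbb]) (v 1)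
    rw [show u 0 ⬝ᵥ u 0 = 1 by simpa using huu 0 0] at hbP0
    rw [show u 1 ⬝ᵥ u 1 = 1 by simpa using huu 1 1] at hbP1
    rw [show v 0 ⬝ᵥ v 0 = 1 by simpa using hvv 0 0] at hbB0
    rw [show v 1 ⬝ᵥ v 1 = 1 by simpa using hvv 1 1] at hbB1
    have hbU : ∀ j, (p j ⬝ᵥ u 0) ^ 2 + (p j ⬝ᵥ u 1) ^ 2 + (p j ⬝ᵥ u 2) ^ 2 ≤ 1 := by
      intro j
      have h := bessel3 u (by simpa using huu 0 1) (by simpa using huu 0 2)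
        (by simpa using huu 1 2) (by simp [huu]) (by simp [huu]) (by simp [huu]) (p j)
      rw [dotProduct_comm (u 0), dotProduct_comm (u 1),
        dotProduct_comm (u 2)] at h
      exact le_trans h (hpn j)
    have hbV : ∀ j, (b j ⬝ᵥ v 0) ^ 2 + (b j ⬝ᵥ v 1) ^ 2 + (b j ⬝ᵥ v 2) ^ 2 ≤ 1 := by
      intro j
      have h := bessel3 v (by simpa using hvv 0 1) (by simpa using hvv 0 2)
        (by simpa using hvv 1 2) (by simp [hvv]) (by simp [hvv]) (by simp [hvv]) (b j)
      rw [dotProduct_comm (v 0), dotProduct_comm (v 1),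
        dotProduct_comm (v 2)] at h
      have hb1 : b j ⬝ᵥ b j = 1 := by simpa using hbb j j
      rw [hb1] at h
      exact h
    -- final linear arithmetic
    have hs2 : (0:ℝ) ≤ s₂ := le_trans h3 h23
    have P1 : 0 ≤ (s₁ - s₂) * (2 - ((p 0 ⬝ᵥ u 0)^2 + (p 0 ⬝ᵥ u 1)^2
        + (b 0 ⬝ᵥ v 0)^2 + (b 0 ⬝ᵥ v 1)^2)) := by
      apply mul_nonneg (by linarith)
      have h1 := hbU 0
      have h2 := hbV 0
      nlinarith [sq_nonneg (p 0 ⬝ᵥ u 2), sq_nonneg (b 0 ⬝ᵥ v 2)]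
    have P2 : 0 ≤ s₂ * (4 - (((p 0 ⬝ᵥ u 0)^2 + (p 1 ⬝ᵥ u 0)^2 + (p 2 ⬝ᵥ u 0)^2)
        + ((p 0 ⬝ᵥ u 1)^2 + (p 1 ⬝ᵥ u 1)^2 + (p 2 ⬝ᵥ u 1)^2)
        + ((b 0 ⬝ᵥ v 0)^2 + (b 1 ⬝ᵥ v 0)^2 + (b 2 ⬝ᵥ v 0)^2)
        + ((b 0 ⬝ᵥ v 1)^2 + (b 1 ⬝ᵥ v 1)^2 + (b 2 ⬝ᵥ v 1)^2))) := by
      apply mul_nonneg hs2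
      have h1 := hbB0
      have h2 := hbB1
      nlinarith [sq_nonneg (b 0 ⬝ᵥ v 0)]
    have P3 : 0 ≤ (s₂ - s₃) * ((p 2 ⬝ᵥ u 0)^2 + (p 2 ⬝ᵥ u 1)^2
        + (b 2 ⬝ᵥ v 0)^2 + (b 2 ⬝ᵥ v 1)^2) := by
      apply mul_nonneg (by linarith)
      positivity
    have T0 := mul_nonneg (hσnn 0) (sq_nonneg ((p 0 ⬝ᵥ u 0) - (b 0 ⬝ᵥ v 1)))
    have T0' := mul_nonneg (hσnn 0) (sq_nonneg ((p 0 ⬝ᵥ u 1) - (b 0 ⬝ᵥ v 0)))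
    have T1 := mul_nonneg (hσnn 1) (sq_nonneg ((p 1 ⬝ᵥ u 0) - (b 1 ⬝ᵥ v 1)))
    have T1' := mul_nonneg (hσnn 1) (sq_nonneg ((p 1 ⬝ᵥ u 1) - (b 1 ⬝ᵥ v 0)))
    have T2 := mul_nonneg (hσnn 2) (sq_nonneg ((p 2 ⬝ᵥ u 0) - (b 2 ⬝ᵥ v 1)))
    have T2' := mul_nonneg (hσnn 2) (sq_nonneg ((p 2 ⬝ᵥ u 1) - (b 2 ⬝ᵥ v 0)))
    simp only [hσ0, hσ1, hσ2] at T0 T0' T1 T1' T2 T2' ⊢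
    nlinarith [T0, T0', T1, T1', T2, T2', P1, P2, P3, hbP0, hbP1]
  · -- equality
    by_cases h1 : σ 0 = 0
    · have hs1 : s₁ = 0 := by rw [← hσ0, h1]
      have hs2 : s₂ = 0 := by linarith
      have hs3 : s₃ = 0 := by linarith
      refine ⟨1, 1, ?_⟩
      have hcoe : ((1 : Matrix.specialOrthogonalGroup (Fin 3) ℝ) : Matrix (Fin 3) (Fin 3) ℝ)
          = 1 := rfl
      rw [hcoe, entry_aux 1 1 0 1, entry_aux 1 1 1 0, hdot, hdot, hσ0, hσ1, hσ2,
        hs1, hs2, hs3]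
      ring
    · have hp00 : p 0 ⬝ᵥ p 0 = 1 := hpn1 0 h1
      obtain ⟨y, hyy, hp0y, hy1⟩ : ∃ y : Fin 3 → ℝ, y ⬝ᵥ y = 1 ∧ p 0 ⬝ᵥ y = 0 ∧
          σ 1 * (p 1 ⬝ᵥ y) = σ 1 := by
        by_cases h2 : σ 1 = 0
        · obtain ⟨y, hyy, hqy⟩ := perp_unit (p 0) hp00
          exact ⟨y, hyy, hqy, by rw [h2]; ring⟩
        · refine ⟨p 1, hpn1 1 h2, hpp 0 1 (by decide), ?_⟩
          rw [hpn1 1 h2, mul_one]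
      obtain ⟨MR, hMRmem, hMR0, hMR1⟩ := so3_cols (p 0) y hp00 hyy hp0y
      obtain ⟨MS, hMSmem, hMS0, hMS1⟩ := so3_cols (b 1) (b 0)
        (by simpa using hbb 1 1) (by simpa using hbb 0 0) (by simpa using hbb 1 0)
      refine ⟨⟨MR, hMRmem⟩, ⟨MS, hMSmem⟩, ?_⟩
      have hcoeR : ((⟨MR, hMRmem⟩ : Matrix.specialOrthogonalGroup (Fin 3) ℝ)
          : Matrix (Fin 3) (Fin 3) ℝ) = MR := rfl
      have hcoeS : ((⟨MS, hMSmem⟩ : Matrix.specialOrthogonalGroup (Fin 3) ℝ)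
          : Matrix (Fin 3) (Fin 3) ℝ) = MS := rfl
      rw [hcoeR, hcoeS, entry_aux MR MS 0 1, entry_aux MR MS 1 0]
      have hc0 : (fun i => MR i 0) = p 0 := funext hMR0
      have hc1 : (fun i => MR i 1) = y := funext hMR1
      have hc2 : (fun i => MS i 0) = b 1 := funext hMS0
      have hc3 : (fun i => MS i 1) = b 0 := funext hMS1
      rw [hc0, hc1, hc2, hc3, hdot, hdot]
      have e00 : b 0 ⬝ᵥ b 0 = 1 := by simpa using hbb 0 0
      have e11 : b 1 ⬝ᵥ b 1 = 1 := by simpa using hbb 1 1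
      have e01 : b 0 ⬝ᵥ b 1 = 0 := by simpa using hbb 0 1
      have e10 : b 1 ⬝ᵥ b 0 = 0 := by simpa using hbb 1 0
      have e20 : b 2 ⬝ᵥ b 0 = 0 := by simpa using hbb 2 0
      have e21 : b 2 ⬝ᵥ b 1 = 0 := by simpa using hbb 2 1
      rw [e00, e11, e01, e10, e20, e21, hp00]
      rw [← hσ0, ← hσ1]
      linear_combination hy1
end

section
/- Let C be a 3×3 real symmetric matrix with eigenvalues ℓ₁ ≥ ℓ₂ ≥ ℓ₃. Then for all R ∈ SO(3), (RᵀCR)₁₂ + (RᵀCR)₂₁ ≤ ℓ₁ - ℓ₃, and there exists R ∈ SO(3) achieving equality. -/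
open Matrix

private lemma sum_entry_diag (d : Fin 3 → ℝ) (Q : Matrix (Fin 3) (Fin 3) ℝ) (i j : Fin 3) :
    (Qᵀ * diagonal d * Q) i j = ∑ k, Q k i * (d k * Q k j) := by
  rw [mul_assoc]
  simp [mul_apply, diagonal, ite_mul, Finset.sum_ite_eq]

private lemma key_ineq (ℓ₁ ℓ₃ : ℝ) (d a b : Fin 3 → ℝ)
    (hd : ∀ k, ℓ₃ ≤ d k ∧ d k ≤ ℓ₁)
    (ha : ∑ k, a k * a k = 1) (hb : ∑ k, b k * b k = 1)
    (hab : ∑ k, a k * b k = 0) :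
    (∑ k, a k * (d k * b k)) + ∑ k, b k * (d k * a k) ≤ ℓ₁ - ℓ₃ := by
  simp only [Fin.sum_univ_three] at ha hb hab ⊢
  obtain ⟨h0l, h0u⟩ := hd 0
  obtain ⟨h1l, h1u⟩ := hd 1
  obtain ⟨h2l, h2u⟩ := hd 2
  have E : (ℓ₁ - d 0)*(a 0 + b 0)^2 + (ℓ₁ - d 1)*(a 1 + b 1)^2 + (ℓ₁ - d 2)*(a 2 + b 2)^2
      + (d 0 - ℓ₃)*(a 0 - b 0)^2 + (d 1 - ℓ₃)*(a 1 - b 1)^2 + (d 2 - ℓ₃)*(a 2 - b 2)^2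
      = 2*ℓ₁ - 2*ℓ₃ - 4*(a 0 * (d 0 * b 0) + a 1 * (d 1 * b 1) + a 2 * (d 2 * b 2)) := by
    linear_combination (ℓ₁ - ℓ₃)*ha + (ℓ₁ - ℓ₃)*hb + (2*ℓ₁ + 2*ℓ₃)*hab
  nlinarith [mul_nonneg (sub_nonneg.2 h0u) (sq_nonneg (a 0 + b 0)),
    mul_nonneg (sub_nonneg.2 h1u) (sq_nonneg (a 1 + b 1)),
    mul_nonneg (sub_nonneg.2 h2u) (sq_nonneg (a 2 + b 2)),
    mul_nonneg (sub_nonneg.2 h0l) (sq_nonneg (a 0 - b 0)),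
    mul_nonneg (sub_nonneg.2 h1l) (sq_nonneg (a 1 - b 1)),
    mul_nonneg (sub_nonneg.2 h2l) (sq_nonneg (a 2 - b 2)), E]

set_option maxHeartbeats 1000000 in
/-- For a real symmetric 3×3 matrix `C` with eigenvalues `ℓ₁ ≥ ℓ₂ ≥ ℓ₃`, one has
`(RᵀCR)₁₂ + (RᵀCR)₂₁ ≤ ℓ₁ - ℓ₃` for all `R ∈ SO(3)`, with equality for some `R`. -/
theorem stmt_8 (C : Matrix (Fin 3) (Fin 3) ℝ) (hC : C.IsHermitian)
    (ℓ₁ ℓ₂ ℓ₃ : ℝ) (h12 : ℓ₂ ≤ ℓ₁) (h23 : ℓ₃ ≤ ℓ₂)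
    (heig : ∃ g : Equiv.Perm (Fin 3), hC.eigenvalues ∘ g = ![ℓ₁, ℓ₂, ℓ₃]) :
    (∀ R : Matrix.specialOrthogonalGroup (Fin 3) ℝ,
      ((R : Matrix (Fin 3) (Fin 3) ℝ)ᵀ * C * (R : Matrix (Fin 3) (Fin 3) ℝ)) 0 1 +
      ((R : Matrix (Fin 3) (Fin 3) ℝ)ᵀ * C * (R : Matrix (Fin 3) (Fin 3) ℝ)) 1 0
        ≤ ℓ₁ - ℓ₃) ∧
    ∃ R : Matrix.specialOrthogonalGroup (Fin 3) ℝ,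
      ((R : Matrix (Fin 3) (Fin 3) ℝ)ᵀ * C * (R : Matrix (Fin 3) (Fin 3) ℝ)) 0 1 +
      ((R : Matrix (Fin 3) (Fin 3) ℝ)ᵀ * C * (R : Matrix (Fin 3) (Fin 3) ℝ)) 1 0
        = ℓ₁ - ℓ₃ := by
  classical
  obtain ⟨g, hg⟩ := heig
  set d : Fin 3 → ℝ := hC.eigenvalues with hd_def
  set U : Matrix (Fin 3) (Fin 3) ℝ := (hC.eigenvectorUnitary : Matrix (Fin 3) (Fin 3) ℝ)
    with hU_def
  have hUtU : Uᵀ * U = 1 := by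
    have := Unitary.coe_star_mul_self hC.eigenvectorUnitary
    simpa [hU_def, star_eq_conjTranspose, conjTranspose_eq_transpose_of_trivial] using this
  have hUUt : U * Uᵀ = 1 := by
    have := Unitary.coe_mul_star_self hC.eigenvectorUnitary
    simpa [hU_def, star_eq_conjTranspose, conjTranspose_eq_transpose_of_trivial] using this
  have hCU : C = U * diagonal d * Uᵀ := by
    have h := hC.spectral_theorem
    simpa [hU_def, hd_def, star_eq_conjTranspose, conjTranspose_eq_transpose_of_trivial,
      Function.comp] using h
  have hdg : ∀ m : Fin 3, d (g m) = ![ℓ₁, ℓ₂, ℓ₃] m := fun m => congrFun hg m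
  have hbound : ∀ k : Fin 3, ℓ₃ ≤ d k ∧ d k ≤ ℓ₁ := by
    intro k
    have h1 : d k = ![ℓ₁, ℓ₂, ℓ₃] (g.symm k) := by
      have := hdg (g.symm k); simpa using this
    rw [h1]
    have h2 : ∀ i : Fin 3, ℓ₃ ≤ ![ℓ₁, ℓ₂, ℓ₃] i ∧ ![ℓ₁, ℓ₂, ℓ₃] i ≤ ℓ₁ := by
      intro i
      fin_cases i <;> constructor <;> simp <;> linarith
    exact h2 _
  constructor
  · -- upper bound
    intro R
    set M : Matrix (Fin 3) (Fin 3) ℝ := (R : Matrix (Fin 3) (Fin 3) ℝ) with hM_def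
    have hMtM : Mᵀ * M = 1 := by
      have h := R.2.1.1
      simpa [hM_def, star_eq_conjTranspose, conjTranspose_eq_transpose_of_trivial] using h
    set Q : Matrix (Fin 3) (Fin 3) ℝ := Uᵀ * M with hQ_def
    have hQtQ : Qᵀ * Q = 1 := by
      rw [hQ_def, transpose_mul, transpose_transpose, mul_assoc, ← mul_assoc U, hUUt, one_mul,
        hMtM]
    have hconv : Mᵀ * C * M = Qᵀ * diagonal d * Q := by
      rw [hCU, hQ_def, transpose_mul, transpose_transpose]
      simp only [mul_assoc]
    have hent : ∀ i j : Fin 3, (Qᵀ * Q) i j = ∑ k, Q k i * Q k j := by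
      intro i j; simp [mul_apply]
    have ha : ∑ k, Q k 0 * Q k 0 = 1 := by
      rw [← hent 0 0, hQtQ]; simp
    have hb : ∑ k, Q k 1 * Q k 1 = 1 := by
      rw [← hent 1 1, hQtQ]; simp
    have hab : ∑ k, Q k 0 * Q k 1 = 0 := by
      rw [← hent 0 1, hQtQ]; simp [one_apply]
    calc (Mᵀ * C * M) 0 1 + (Mᵀ * C * M) 1 0
        = (∑ k, Q k 0 * (d k * Q k 1)) + ∑ k, Q k 1 * (d k * Q k 0) := by
          rw [hconv, sum_entry_diag, sum_entry_diag]
      _ ≤ ℓ₁ - ℓ₃ := key_ineq ℓ₁ ℓ₃ d _ _ hbound ha hb hab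
  · -- equality
    set s : ℝ := (Real.sqrt 2)⁻¹ with hs_def
    have hs : s * s = 1/2 := by
      rw [hs_def, ← mul_inv, Real.mul_self_sqrt (by norm_num : (0:ℝ) ≤ 2)]
      norm_num
    set N₀ : Matrix (Fin 3) (Fin 3) ℝ := !![s, s, 0; 0, 0, 1; s, -s, 0] with hN₀_def
    have hN₀ : N₀ᵀ * N₀ = 1 := by
      ext i j
      fin_cases i <;> fin_cases j <;>
        simp [hN₀_def, mul_apply, Fin.sum_univ_three, one_apply, Matrix.vecHead,
          Matrix.vecTail] <;>
        nlinarith [hs]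
    set N : Matrix (Fin 3) (Fin 3) ℝ := N₀.submatrix g.symm id with hN_def
    have hNtN : Nᵀ * N = 1 := by
      rw [← hN₀]
      ext i j
      simp only [mul_apply, transpose_apply, hN_def, submatrix_apply, id]
      exact Equiv.sum_comp g.symm (fun k => N₀ k i * N₀ k j)
    set B : Matrix (Fin 3) (Fin 3) ℝ := U * N with hB_def
    have hBtB : Bᵀ * B = 1 := by
      rw [hB_def, transpose_mul, mul_assoc, ← mul_assoc Uᵀ, hUtU, one_mul, hNtN]
    set e : ℝ := B.det with he_def
    have he : e * e = 1 := by
      have h := congrArg Matrix.det hBtB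
      simpa [det_mul, det_transpose, he_def] using h
    set v : Fin 3 → ℝ := ![1, 1, e] with hv_def
    have hvv : diagonal (fun i => v i * v i) = 1 := by
      have h : (fun i => v i * v i) = fun _ => (1:ℝ) := by
        funext i; fin_cases i <;> simp [hv_def, he]
      rw [h]
      exact diagonal_one
    set R : Matrix (Fin 3) (Fin 3) ℝ := B * diagonal v with hR_def
    have hRtR : Rᵀ * R = 1 := by
      rw [hR_def, transpose_mul, diagonal_transpose, mul_assoc, ← mul_assoc Bᵀ, hBtB, one_mul,
        diagonal_mul_diagonal, hvv]
    have hdetR : R.det = 1 := by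
      rw [hR_def, det_mul, det_diagonal]
      simp [hv_def, Fin.prod_univ_three, ← he_def]
      linarith [he]
    have hmem : R ∈ Matrix.specialOrthogonalGroup (Fin 3) ℝ := by
      refine Matrix.mem_specialOrthogonalGroup_iff.mpr ⟨?_, hdetR⟩
      rw [Matrix.mem_orthogonalGroup_iff]
      have hst : star R = Rᵀ := by
        simp [star_eq_conjTranspose, conjTranspose_eq_transpose_of_trivial]
      rw [mul_eq_one_comm]
      exact hRtR
    refine ⟨⟨R, hmem⟩, ?_⟩
    have hBCB : Bᵀ * C * B = Nᵀ * diagonal d * N := by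
      rw [hCU, hB_def, transpose_mul]
      have h1 : Nᵀ * Uᵀ * (U * diagonal d * Uᵀ) * (U * N)
          = Nᵀ * ((Uᵀ * U) * diagonal d * (Uᵀ * U)) * N := by
        simp only [mul_assoc]
      rw [h1, hUtU, one_mul, mul_one]
    have hconv : Rᵀ * C * R = diagonal v * (Nᵀ * diagonal d * N) * diagonal v := by
      rw [hR_def, transpose_mul, diagonal_transpose]
      have h1 : diagonal v * Bᵀ * C * (B * diagonal v)
          = diagonal v * (Bᵀ * C * B) * diagonal v := by
        simp only [mul_assoc]
      rw [h1, hBCB]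
    have hentry : ∀ i j : Fin 3,
        (diagonal v * (Nᵀ * diagonal d * N) * diagonal v) i j
          = v i * (Nᵀ * diagonal d * N) i j * v j := by
      intro i j
      rw [mul_assoc, diagonal_mul, mul_diagonal]
      ring
    have hsum : ∀ i j : Fin 3,
        (Nᵀ * diagonal d * N) i j = ∑ m, N₀ m i * (d (g m) * N₀ m j) := by
      intro i j
      rw [sum_entry_diag, ← Equiv.sum_comp g (fun k => N k i * (d k * N k j))]
      apply Finset.sum_congr rfl
      intro m _
      simp [hN_def]
    have hval01 : (Nᵀ * diagonal d * N) 0 1 = (ℓ₁ - ℓ₃)/2 := by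
      rw [hsum, Fin.sum_univ_three, hdg 0, hdg 1, hdg 2]
      simp [hN₀_def, Matrix.vecHead, Matrix.vecTail]
      nlinarith [hs]
    have hval10 : (Nᵀ * diagonal d * N) 1 0 = (ℓ₁ - ℓ₃)/2 := by
      rw [hsum, Fin.sum_univ_three, hdg 0, hdg 1, hdg 2]
      simp [hN₀_def, Matrix.vecHead, Matrix.vecTail]
      nlinarith [hs]
    show (Rᵀ * C * R) 0 1 + (Rᵀ * C * R) 1 0 = ℓ₁ - ℓ₃
    rw [hconv, hentry, hentry, hval01, hval10]
    simp [hv_def]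
end

section
/- Let (a,b,c,d) ∈ ℝ⁴ be majorized by (ℓ₁,ℓ₂,ℓ₃,ℓ₄) with ℓ₁ ≥ ℓ₂ ≥ ℓ₃ ≥ ℓ₄. Then (1/4)(a-c)(b-d) ≤ (1/16)(ℓ₁+ℓ₂-ℓ₃-ℓ₄)², and the maximum of (1/4)(a-c)(b-d) over all vectors majorized by (ℓ₁,ℓ₂,ℓ₃,ℓ₄) equals (1/16)(ℓ₁+ℓ₂-ℓ₃-ℓ₄)². -/
/-- `x` is majorized by `y` (for `y` sorted non-increasingly): the sum of the entries
of `x` over any subset is at most the sum of the corresponding number of largest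
entries of `y`, and the total sums agree. -/
def MajorizedBy4 (x y : Fin 4 → ℝ) : Prop :=
  (∀ s : Finset (Fin 4),
    ∑ i ∈ s, x i ≤ ∑ i ∈ Finset.univ.filter (fun j : Fin 4 => (j : ℕ) < s.card), y i) ∧
  ∑ i, x i = ∑ i, y i

/-- The maximum of `(1/4)(a-c)(b-d)` over all `(a,b,c,d)` majorized by
`(ℓ₁,ℓ₂,ℓ₃,ℓ₄)` (with `ℓ₁ ≥ ℓ₂ ≥ ℓ₃ ≥ ℓ₄`) equals `(1/16)(ℓ₁+ℓ₂-ℓ₃-ℓ₄)²`;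
in particular every such `(a,b,c,d)` satisfies the corresponding inequality. -/
theorem stmt_9 (ℓ₁ ℓ₂ ℓ₃ ℓ₄ : ℝ) (h12 : ℓ₂ ≤ ℓ₁) (h23 : ℓ₃ ≤ ℓ₂) (h34 : ℓ₄ ≤ ℓ₃) :
    IsGreatest {v : ℝ | ∃ x : Fin 4 → ℝ, MajorizedBy4 x ![ℓ₁, ℓ₂, ℓ₃, ℓ₄] ∧
        v = (1 / 4) * (x 0 - x 2) * (x 1 - x 3)}
      ((1 / 16) * (ℓ₁ + ℓ₂ - ℓ₃ - ℓ₄) ^ 2) := by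
  constructor
  · -- membership
    set m : ℝ := (ℓ₁ + ℓ₂) / 2 with hm
    set n : ℝ := (ℓ₃ + ℓ₄) / 2 with hn
    refine ⟨![m, m, n, n], ⟨?_, ?_⟩, ?_⟩
    · intro s
      fin_cases s <;>
        norm_num [Finset.sum_filter, Fin.sum_univ_four, hm, hn, show ((3:Fin 4):ℕ) = 3 from rfl, show (![ℓ₁, ℓ₂, ℓ₃, ℓ₄] : Fin 4 → ℝ) 2 = ℓ₃ from rfl, show (![ℓ₁, ℓ₂, ℓ₃, ℓ₄] : Fin 4 → ℝ) 3 = ℓ₄ from rfl] <;> linarith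
    · simp [Fin.sum_univ_four, hm, hn]; ring
    · simp [hm, hn]; ring
  · -- upper bound
    rintro v ⟨x, ⟨hmaj, hsum⟩, rfl⟩
    have h01 := hmaj {0, 1}
    have h23' := hmaj {2, 3}
    norm_num [Finset.sum_filter, Fin.sum_univ_four, show ((3:Fin 4):ℕ) = 3 from rfl, show ({2,3}:Finset (Fin 4)).card = 2 from rfl, show ({0,1}:Finset (Fin 4)).card = 2 from rfl, Finset.sum_insert, Finset.mem_singleton, Finset.sum_singleton, show (![ℓ₁, ℓ₂, ℓ₃, ℓ₄] : Fin 4 → ℝ) 2 = ℓ₃ from rfl, show (![ℓ₁, ℓ₂, ℓ₃, ℓ₄] : Fin 4 → ℝ) 3 = ℓ₄ from rfl] at h01 h23' hsum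
    rw [Finset.sum_pair (by decide : (2:Fin 4) ≠ 3)] at h23'
    nlinarith [sq_nonneg (x 0 - x 2 - (x 1 - x 3)), sq_nonneg (x 0 + x 1 - x 2 - x 3),
      sq_nonneg (ℓ₁ + ℓ₂ - ℓ₃ - ℓ₄ - (x 0 + x 1 - x 2 - x 3)),
      sq_nonneg (ℓ₁ + ℓ₂ - ℓ₃ - ℓ₄ + (x 0 + x 1 - x 2 - x 3))]
end

section
/- Let A be a 4×4 Hermitian matrix with eigenvalues ℓ₁ ≥ ℓ₂ ≥ ℓ₃ ≥ ℓ₄. Then there exists a unitary U ∈ U(4) such that, with M = U*AU, |Im(M₁₃M₂₄ - M₁₄M₂₃)| ≥ (1/4)(ℓ₁-ℓ₃)(ℓ₂-ℓ₄). -/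
open Matrix

noncomputable def Wmat : Matrix (Fin 4) (Fin 4) ℂ :=
  (((Real.sqrt 2 : ℝ) : ℂ)⁻¹) • !![1,0,Complex.I,0; 0,1,0,1; 1,0,-Complex.I,0; 0,1,0,-1]

lemma sq2 : (((Real.sqrt 2 : ℝ) : ℂ)) ^ 2 = 2 := by
  norm_cast
  rw [Real.sq_sqrt] <;> norm_num

lemma conj_s : (starRingEnd ℂ) (((Real.sqrt 2 : ℝ) : ℂ)⁻¹) = ((Real.sqrt 2 : ℝ) : ℂ)⁻¹ := by
  simp [map_inv₀, Complex.conj_ofReal]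

lemma Wmat_unitary : star Wmat * Wmat = 1 := by
  have h2 : (((Real.sqrt 2 : ℝ) : ℂ)) * (((Real.sqrt 2 : ℝ) : ℂ)) = 2 := by
    rw [← sq]; exact sq2
  ext j k
  simp only [Matrix.mul_apply, Matrix.star_apply, Wmat, Matrix.smul_apply, smul_eq_mul,
    Fin.sum_univ_four, _root_.map_mul, conj_s]
  fin_cases j <;> fin_cases k <;>
    simp [Matrix.one_apply, Complex.ext_iff] <;>
    field_simp <;> ring_nf <;> simp [sq2, Complex.ext_iff] <;> norm_num

/-- For a 4×4 Hermitian matrix `A` with eigenvalues `ℓ₁ ≥ ℓ₂ ≥ ℓ₃ ≥ ℓ₄` there is a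
unitary `U ∈ U(4)` such that, with `M = U*AU`,
`|Im(M₁₃M₂₄ - M₁₄M₂₃)| ≥ (1/4)(ℓ₁-ℓ₃)(ℓ₂-ℓ₄)`. -/
theorem stmt_13 (A : Matrix (Fin 4) (Fin 4) ℂ) (hA : A.IsHermitian)
    (ℓ₁ ℓ₂ ℓ₃ ℓ₄ : ℝ) (h12 : ℓ₂ ≤ ℓ₁) (h23 : ℓ₃ ≤ ℓ₂) (h34 : ℓ₄ ≤ ℓ₃)
    (heig : ∃ g : Equiv.Perm (Fin 4), hA.eigenvalues ∘ g = ![ℓ₁, ℓ₂, ℓ₃, ℓ₄]) :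
    ∃ U : Matrix.unitaryGroup (Fin 4) ℂ,
      (1 / 4) * (ℓ₁ - ℓ₃) * (ℓ₂ - ℓ₄) ≤
        |((star (U : Matrix (Fin 4) (Fin 4) ℂ) * A * (U : Matrix (Fin 4) (Fin 4) ℂ)) 0 2 *
          (star (U : Matrix (Fin 4) (Fin 4) ℂ) * A * (U : Matrix (Fin 4) (Fin 4) ℂ)) 1 3 -
          (star (U : Matrix (Fin 4) (Fin 4) ℂ) * A * (U : Matrix (Fin 4) (Fin 4) ℂ)) 0 3 *
          (star (U : Matrix (Fin 4) (Fin 4) ℂ) * A * (U : Matrix (Fin 4) (Fin 4) ℂ)) 1 2).im| := by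
  obtain ⟨g, hg⟩ := heig
  have hgd : ∀ n, hA.eigenvalues (g n) = ![ℓ₁, ℓ₂, ℓ₃, ℓ₄] n := fun n => congrFun hg n
  set V : Matrix (Fin 4) (Fin 4) ℂ := (hA.eigenvectorUnitary : Matrix (Fin 4) (Fin 4) ℂ) with hV
  set Q : Matrix (Fin 4) (Fin 4) ℂ := Matrix.of (fun j k => Wmat (g.symm j) k) with hQ
  have hQmem : Q ∈ Matrix.unitaryGroup (Fin 4) ℂ := by
    rw [Matrix.mem_unitaryGroup_iff']
    ext k k'
    have step : (star Q * Q) k k' = (star Wmat * Wmat) k k' := by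
      calc (star Q * Q) k k'
          = ∑ j, (starRingEnd ℂ) (Wmat (g.symm j) k) * Wmat (g.symm j) k' := by
            simp [Matrix.mul_apply, Matrix.star_apply, hQ]
        _ = ∑ n, (starRingEnd ℂ) (Wmat n k) * Wmat n k' :=
            Equiv.sum_comp g.symm (fun n => (starRingEnd ℂ) (Wmat n k) * Wmat n k')
        _ = (star Wmat * Wmat) k k' := by
            simp [Matrix.mul_apply, Matrix.star_apply]
    rw [step, Wmat_unitary]
  refine ⟨⟨V * Q, mul_mem hA.eigenvectorUnitary.2 hQmem⟩, ?_⟩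
  set D : Matrix (Fin 4) (Fin 4) ℂ := Matrix.diagonal (RCLike.ofReal ∘ hA.eigenvalues) with hD
  have hM : star (V * Q) * A * (V * Q) = star Q * D * Q := by
    have h1 : star V * A * V = D := by
      have := hA.conjStarAlgAut_star_eigenvectorUnitary
      rw [Unitary.conjStarAlgAut_apply, Unitary.coe_star, star_star] at this
      exact this
    calc star (V * Q) * A * (V * Q) = star Q * (star V * A * V) * Q := by
          simp only [Matrix.star_mul, Matrix.mul_assoc]
      _ = star Q * D * Q := by rw [h1]
  have key : ∀ j k, (star Q * D * Q) j k =
      ∑ n, (starRingEnd ℂ) (Wmat n j) * ((![ℓ₁, ℓ₂, ℓ₃, ℓ₄] n : ℝ) : ℂ) * Wmat n k := by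
    intro j k
    calc (star Q * D * Q) j k
        = ∑ m, (starRingEnd ℂ) (Q m j) * ((hA.eigenvalues m : ℝ) : ℂ) * Q m k := by
          rw [Matrix.mul_assoc]
          simp [Matrix.mul_apply, Matrix.diagonal_apply, Matrix.star_apply, hD,
            Finset.mul_sum, mul_ite, ite_mul, zero_mul, mul_zero, Finset.sum_ite_eq,
            mul_comm, mul_assoc, mul_left_comm, RCLike.ofReal_alg]
      _ = ∑ n, (starRingEnd ℂ) (Q (g n) j) * ((hA.eigenvalues (g n) : ℝ) : ℂ) * Q (g n) k :=
          (Equiv.sum_comp g _).symm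
      _ = _ := by
          refine Finset.sum_congr rfl fun n _ => ?_
          rw [hgd]
          simp [hQ]
  have e02 : (star Q * D * Q) 0 2 = Complex.I * ((ℓ₁ - ℓ₃ : ℝ) / 2) := by
    rw [key]
    simp [Wmat, Fin.sum_univ_four, conj_s, Matrix.smul_apply]
    have h2 : (((Real.sqrt 2 : ℝ) : ℂ)) * (((Real.sqrt 2 : ℝ) : ℂ)) = 2 := by
      rw [← sq]; exact sq2
    field_simp
    ring_nf
    simp [sq2]
  have e13 : (star Q * D * Q) 1 3 = (((ℓ₂ - ℓ₄ : ℝ) / 2 : ℝ) : ℂ) := by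
    rw [key]
    simp [Wmat, Fin.sum_univ_four, conj_s, Matrix.smul_apply]
    field_simp
    ring_nf
    simp [sq2]
  have e03 : (star Q * D * Q) 0 3 = 0 := by
    rw [key]
    simp [Wmat, Fin.sum_univ_four, conj_s, Matrix.smul_apply]
  have e12 : (star Q * D * Q) 1 2 = 0 := by
    rw [key]
    simp [Wmat, Fin.sum_univ_four, conj_s, Matrix.smul_apply]
  show (1 / 4) * (ℓ₁ - ℓ₃) * (ℓ₂ - ℓ₄) ≤
      |((star (V * Q) * A * (V * Q)) 0 2 * (star (V * Q) * A * (V * Q)) 1 3 -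
        (star (V * Q) * A * (V * Q)) 0 3 * (star (V * Q) * A * (V * Q)) 1 2).im|
  rw [hM, e02, e13, e03, e12]
  have him : (Complex.I * ((ℓ₁ - ℓ₃ : ℝ) / 2) * (((ℓ₂ - ℓ₄ : ℝ) / 2 : ℝ) : ℂ) -
      0 * 0).im = ((ℓ₁ - ℓ₃) / 2) * ((ℓ₂ - ℓ₄) / 2) := by
    simp [Complex.mul_im, Complex.mul_re]
  rw [him]
  exact le_trans (le_of_eq (by ring)) (le_abs_self _)
end
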